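/- arXiv:2310.02741 — 6 statements merged into one kernel-verified Lean document; each statement's English description precedes it below -/
import Mathlib

section
/- For any constants c₁, c₂ ∈ ℝ, the functions Ω(τ) = (1 + e^{3τ + 2c₁})^{−1/2} and z(τ) = c₂·e^{τ}/(1 + e^{3τ + 2c₁}) are differentiable on ℝ and satisfy, for every τ ∈ ℝ, the averaged perturbation system Ω'(τ) = (3/2)·Ω(τ)·(Ω(τ)² − 1) and z'(τ) = (3·Ω(τ)² − 2)·z(τ). -/
/-! With `u(τ) = 1 + e^{3τ + 2c₁}` we have `u' = 3(u - 1)` and `Ω² = 1/u`. Hence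
`Ω' = -(u'/2u) Ω = (3/2) Ω (1/u - 1) = (3/2) Ω (Ω² - 1)` and
`z'/z = 1 - u'/u = 3/u - 2 = 3Ω² - 2`. -/

open Real

lemma hasDerivAt_one_add_exp_affine (a b τ : ℝ) :
    HasDerivAt (fun t => 1 + exp (a * t + b)) (a * exp (a * τ + b)) τ := by
  have h_affine : HasDerivAt (fun t => a * t + b) a τ := by
    simpa using ((hasDerivAt_id τ).const_mul a).add_const b
  simpa [mul_comm] using h_affine.exp.const_add 1

lemma HasDerivAt.one_div_sqrt {u : ℝ → ℝ} {u' τ : ℝ} (hu : HasDerivAt u u' τ) (hpos : 0 < u τ) :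
    HasDerivAt (fun t => 1 / √(u t)) (-(u' / (2 * u τ)) * (1 / √(u τ))) τ := by
  have h_sqrt_pos : 0 < √(u τ) := sqrt_pos.mpr hpos
  have h_deriv : -(u' / (2 * √(u τ))) / √(u τ) ^ 2 = -(u' / (2 * u τ)) * (√(u τ))⁻¹ := by
    rw [sq_sqrt hpos.le]
    field_simp
  simpa only [one_div] using ((hu.sqrt hpos.ne').fun_inv h_sqrt_pos.ne').congr_deriv h_deriv

lemma one_div_sqrt_sq {x : ℝ} (hx : 0 ≤ x) : (1 / √x) ^ 2 = 1 / x := by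
  rw [div_pow, one_pow, sq_sqrt hx]

/-- The functions `Ω(τ) = (1 + e^{3τ+2c₁})^{-1/2}` and
`z(τ) = c₂ e^τ / (1 + e^{3τ+2c₁})` solve the averaged perturbation system
`Ω' = (3/2) Ω (Ω² - 1)`, `z' = (3Ω² - 2) z` on all of `ℝ`. -/
theorem averaged_perturbation_solutions (c₁ c₂ : ℝ) :
    ∀ τ : ℝ,
      HasDerivAt (fun τ => 1 / Real.sqrt (1 + Real.exp (3 * τ + 2 * c₁)))
        (3 / 2 * (1 / Real.sqrt (1 + Real.exp (3 * τ + 2 * c₁))) *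
          ((1 / Real.sqrt (1 + Real.exp (3 * τ + 2 * c₁))) ^ 2 - 1)) τ ∧
      HasDerivAt (fun τ => c₂ * Real.exp τ / (1 + Real.exp (3 * τ + 2 * c₁)))
        ((3 * (1 / Real.sqrt (1 + Real.exp (3 * τ + 2 * c₁))) ^ 2 - 2) *
          (c₂ * Real.exp τ / (1 + Real.exp (3 * τ + 2 * c₁)))) τ := by
  intro τ
  have hu := hasDerivAt_one_add_exp_affine 3 (2 * c₁) τ
  have hu_pos : 0 < 1 + exp (3 * τ + 2 * c₁) := by positivity
  rw [one_div_sqrt_sq hu_pos.le]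
  constructor
  · refine (hu.one_div_sqrt hu_pos).congr_deriv ?_
    field_simp
    ring
  · refine (((hasDerivAt_exp τ).const_mul c₂).fun_div hu hu_pos.ne').congr_deriv ?_
    field_simp
    ring
end

section
/- Let c₁, c₄, c₅ ∈ ℝ, c₃ ∈ ℝ with c₃ ≠ 0, and ω ∈ ℝ with ω ≠ 0. Define Ω(τ) = (1 + e^{3τ + 2c₁})^{−1/2}, H(τ) = c₃·e^{−3τ/2}·√(1 + e^{3τ + 2c₁}), y(τ) = c₄ − (2·e^{−2c₁}·(ω² − 1)/(3·c₃²))·ln(1 + e^{3τ + 2c₁}), and Φ(τ) = c₅ − (c₃·e^{−3τ/2}·(ω² − 1)³·√(1 + e^{3τ + 2c₁}))/(4·ω³). Then for every τ ∈ ℝ: H'(τ) = −(3/2)·H(τ)·Ω(τ)², y'(τ) = (2 − 2ω²)/H(τ)², and Φ'(τ) = 3·H(τ)·(ω² − 1)³·Ω(τ)²/(8·ω³). -/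
/-!
With `u = 1 + e^{3τ + 2c₁}` we have `Ω² = 1/u`, and `H = c₃ e^{-3τ/2} √u` has logarithmic
derivative `-3/2 + (3/2)(u - 1)/u = -(3/2)/u`, which is the equation for `H`. Since `Φ` is an
affine function of `H`, its equation follows from that of `H`. For `y`, the identity
`H² = c₃² e^{2c₁} u / (u - 1)` turns `y' = -(2 e^{-2c₁}(ω² - 1)/c₃²)(u - 1)/u` into `(2 - 2ω²)/H²`.
-/

open Real

theorem hasDerivAt_mul_exp_mul_sqrt_one_add_exp (c a b τ : ℝ) :
    HasDerivAt (fun t => c * exp (-a * t / 2) * √(1 + exp (a * t + b)))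
      (-(a / 2) * (c * exp (-a * τ / 2) * √(1 + exp (a * τ + b))) *
        (1 / √(1 + exp (a * τ + b))) ^ 2) τ := by
  have hu : 0 < 1 + exp (a * τ + b) := by positivity
  have hE : HasDerivAt (fun t => exp (-a * t / 2)) (exp (-a * τ / 2) * (-a * 1 / 2)) τ :=
    (((hasDerivAt_id' τ).const_mul (-a)).div_const 2).exp
  have hS : HasDerivAt (fun t => √(1 + exp (a * t + b)))
      (exp (a * τ + b) * (a * 1) / (2 * √(1 + exp (a * τ + b)))) τ :=
    ((((hasDerivAt_id' τ).const_mul a).add_const b).exp.const_add 1).sqrt hu.ne'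
  refine ((hE.const_mul c).mul hS).congr_deriv ?_
  field_simp
  rw [sq_sqrt hu.le]
  ring

theorem sq_mul_exp_mul_sqrt_one_add_exp (c a b τ : ℝ) :
    (c * exp (-a * τ / 2) * √(1 + exp (a * τ + b))) ^ 2 =
      c ^ 2 * exp b * (1 + exp (a * τ + b)) / exp (a * τ + b) := by
  have hu : 0 ≤ 1 + exp (a * τ + b) := by positivity
  have hexp : exp (-a * τ / 2) ^ 2 * exp (a * τ + b) = exp b := by
    rw [← exp_nat_mul, ← exp_add]
    ring_nf
  rw [mul_pow, mul_pow, sq_sqrt hu, eq_div_iff (exp_pos _).ne', ← hexp]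
  ring

theorem averaged_H_y_Phi_solutions_general (c₁ c₃ c₄ c₅ ω : ℝ) :
    let Ω : ℝ → ℝ := fun τ => 1 / Real.sqrt (1 + Real.exp (3 * τ + 2 * c₁))
    let H : ℝ → ℝ := fun τ =>
      c₃ * Real.exp (-3 * τ / 2) * Real.sqrt (1 + Real.exp (3 * τ + 2 * c₁))
    let y : ℝ → ℝ := fun τ =>
      c₄ - 2 * Real.exp (-2 * c₁) * (ω ^ 2 - 1) / (3 * c₃ ^ 2) *
        Real.log (1 + Real.exp (3 * τ + 2 * c₁))
    let Φ : ℝ → ℝ := fun τ =>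
      c₅ - c₃ * Real.exp (-3 * τ / 2) * (ω ^ 2 - 1) ^ 3 *
        Real.sqrt (1 + Real.exp (3 * τ + 2 * c₁)) / (4 * ω ^ 3)
    ∀ τ : ℝ,
      HasDerivAt H (-(3 / 2) * H τ * (Ω τ) ^ 2) τ ∧
      HasDerivAt y ((2 - 2 * ω ^ 2) / (H τ) ^ 2) τ ∧
      HasDerivAt Φ (3 * H τ * (ω ^ 2 - 1) ^ 3 * (Ω τ) ^ 2 / (8 * ω ^ 3)) τ := by
  intro Ω H y Φ τ
  have hH : HasDerivAt H (-(3 / 2) * H τ * Ω τ ^ 2) τ :=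
    hasDerivAt_mul_exp_mul_sqrt_one_add_exp c₃ 3 (2 * c₁) τ
  refine ⟨hH, ?_, ?_⟩
  · have hu : 0 < 1 + exp (3 * τ + 2 * c₁) := by positivity
    refine (((((((hasDerivAt_id' τ).const_mul 3).add_const (2 * c₁)).exp.const_add 1).log
      hu.ne').const_mul _).const_sub c₄).congr_deriv ?_
    rw [sq_mul_exp_mul_sqrt_one_add_exp, neg_mul, exp_neg]
    field_simp
    ring
  · have hΦ : Φ = fun t => c₅ - (ω ^ 2 - 1) ^ 3 / (4 * ω ^ 3) * H t := by
      funext t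
      ring
    rw [hΦ]
    refine ((hH.const_mul _).const_sub c₅).congr_deriv ?_
    ring

/-- The explicit functions `Ω`, `H`, `y`, `Φ` solve the leading-order averaged
equations `H' = -(3/2) H Ω²`, `y' = (2 - 2ω²)/H²`, `Φ' = 3 H (ω²-1)³ Ω²/(8ω³)`
on all of `ℝ`. -/
theorem averaged_H_y_Phi_solutions (c₁ c₃ c₄ c₅ ω : ℝ) (hc₃ : c₃ ≠ 0) (hω : ω ≠ 0) :
    let Ω : ℝ → ℝ := fun τ => 1 / Real.sqrt (1 + Real.exp (3 * τ + 2 * c₁))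
    let H : ℝ → ℝ := fun τ =>
      c₃ * Real.exp (-3 * τ / 2) * Real.sqrt (1 + Real.exp (3 * τ + 2 * c₁))
    let y : ℝ → ℝ := fun τ =>
      c₄ - 2 * Real.exp (-2 * c₁) * (ω ^ 2 - 1) / (3 * c₃ ^ 2) *
        Real.log (1 + Real.exp (3 * τ + 2 * c₁))
    let Φ : ℝ → ℝ := fun τ =>
      c₅ - c₃ * Real.exp (-3 * τ / 2) * (ω ^ 2 - 1) ^ 3 *
        Real.sqrt (1 + Real.exp (3 * τ + 2 * c₁)) / (4 * ω ^ 3)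
    ∀ τ : ℝ,
      HasDerivAt H (-(3 / 2) * H τ * (Ω τ) ^ 2) τ ∧
      HasDerivAt y ((2 - 2 * ω ^ 2) / (H τ) ^ 2) τ ∧
      HasDerivAt Φ (3 * H τ * (ω ^ 2 - 1) ^ 3 * (Ω τ) ^ 2 / (8 * ω ^ 3)) τ :=
  averaged_H_y_Phi_solutions_general c₁ c₃ c₄ c₅ ω
end

section
/- Let γ ∈ [0, 2] with γ ∉ {2/3, 1, 2}. Then the set of points (Ω, Σ, K) ∈ ℝ³ with Ω ≥ 0 at which the vector field G_γ vanishes is exactly the five points P₁ = (0, 0, 0), P₂ = (1, 0, 0), P₃ = (0, 0, 1), P₄ = (0, 1, 0), and P₅ = (0, −1, 0). -/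
/-- The averaged Bianchi V guiding vector field `G_γ(Ω, Σ, K)`. -/
noncomputable def GBV (γ : ℝ) : ℝ × ℝ × ℝ → ℝ × ℝ × ℝ := fun p =>
  (-(1 / 2) * p.1 *
      (3 * γ * (p.2.1 ^ 2 + p.1 ^ 2 + p.2.2 - 1) - 6 * p.2.1 ^ 2 - 3 * p.1 ^ 2
        - 2 * p.2.2 + 3),
   (1 / 2) * p.2.1 *
      (-(3 * γ) * (p.2.1 ^ 2 + p.1 ^ 2 + p.2.2 - 1) + 6 * p.2.1 ^ 2 + 3 * p.1 ^ 2
        + 2 * p.2.2 - 6),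
   -p.2.2 *
      (3 * γ * (p.2.1 ^ 2 + p.1 ^ 2 + p.2.2 - 1) - 6 * p.2.1 ^ 2 - 3 * p.1 ^ 2
        - 2 * p.2.2 + 2))

/-- For `γ ∈ [0,2]`, `γ ∉ {2/3, 1, 2}`, the equilibrium points of the averaged
Bianchi V guiding system with `Ω ≥ 0` are exactly the five points
`P₁ = (0,0,0)`, `P₂ = (1,0,0)`, `P₃ = (0,0,1)`, `P₄ = (0,1,0)`, `P₅ = (0,-1,0)`. -/
theorem bianchiV_equilibria (γ : ℝ) (hγ0 : 0 ≤ γ) (hγ2 : γ ≤ 2)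
    (h1 : γ ≠ 2 / 3) (h2 : γ ≠ 1) (h3 : γ ≠ 2) :
    {p : ℝ × ℝ × ℝ | 0 ≤ p.1 ∧ GBV γ p = 0} =
      {((0 : ℝ), (0 : ℝ), (0 : ℝ)), (1, 0, 0), (0, 0, 1), (0, 1, 0), (0, -1, 0)} := by
  have hg1 : γ - 1 ≠ 0 := sub_ne_zero.mpr h2
  have hg2 : γ - 2 ≠ 0 := sub_ne_zero.mpr h3
  have hg23 : 3 * γ - 2 ≠ 0 := by
    intro h; apply h1; linarith
  ext ⟨Ω, S, K⟩
  simp only [Set.mem_setOf_eq, Set.mem_insert_iff, Set.mem_singleton_iff, GBV,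
    Prod.mk.injEq, Prod.ext_iff, Prod.fst_zero, Prod.snd_zero]
  constructor
  · rintro ⟨hΩ, hA, hB, hC⟩
    have e1 : Ω * (3 * γ * (S ^ 2 + Ω ^ 2 + K - 1) - 6 * S ^ 2 - 3 * Ω ^ 2
        - 2 * K + 3) = 0 := by linear_combination (-2 : ℝ) * hA
    have e2 : S * ((3 * γ * (S ^ 2 + Ω ^ 2 + K - 1) - 6 * S ^ 2 - 3 * Ω ^ 2
        - 2 * K + 3) + 3) = 0 := by linear_combination (-2 : ℝ) * hB
    have e3 : K * ((3 * γ * (S ^ 2 + Ω ^ 2 + K - 1) - 6 * S ^ 2 - 3 * Ω ^ 2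
        - 2 * K + 3) - 1) = 0 := by linear_combination (-1 : ℝ) * hC
    rcases mul_eq_zero.mp e2 with hS | hBv
    · subst hS
      rcases mul_eq_zero.mp e3 with hK | hCv
      · subst hK
        rcases mul_eq_zero.mp e1 with hO | hAv
        · exact Or.inl ⟨hO, rfl, rfl⟩
        · -- (Ω²-1)(γ-1) = 0
          have : (Ω ^ 2 - 1) * (γ - 1) = 0 := by linear_combination hAv / 3
          have hΩ2 : Ω ^ 2 = 1 := by
            rcases mul_eq_zero.mp this with h | h
            · linarith
            · exact absurd h hg1
          have : (Ω - 1) * (Ω + 1) = 0 := by linear_combination hΩ2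
          rcases mul_eq_zero.mp this with h | h
          · exact Or.inr (Or.inl ⟨by linarith, rfl, rfl⟩)
          · nlinarith
      · rcases mul_eq_zero.mp e1 with hO | hAv
        · subst hO
          -- (K-1)(3γ-2) = 0
          have : (K - 1) * (3 * γ - 2) = 0 := by linear_combination hCv
          rcases mul_eq_zero.mp this with h | h
          · exact Or.inr (Or.inr (Or.inl ⟨rfl, rfl, by linarith⟩))
          · exact absurd h hg23
        · exfalso; linarith [hAv, hCv]
    · rcases mul_eq_zero.mp e3 with hK | hCv
      · subst hK
        rcases mul_eq_zero.mp e1 with hO | hAv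
        · subst hO
          -- (S²-1)(γ-2) = 0
          have : (S ^ 2 - 1) * (γ - 2) * 3 = 0 := by linear_combination hBv
          have hS2 : S ^ 2 = 1 := by
            rcases mul_eq_zero.mp this with h | h
            · rcases mul_eq_zero.mp h with h | h
              · linarith
              · exact absurd h hg2
            · norm_num at h
          have : (S - 1) * (S + 1) = 0 := by linear_combination hS2
          rcases mul_eq_zero.mp this with h | h
          · exact Or.inr (Or.inr (Or.inr (Or.inl ⟨rfl, by linarith, rfl⟩)))
          · exact Or.inr (Or.inr (Or.inr (Or.inr ⟨rfl, by linarith, rfl⟩)))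
        · exfalso; linarith [hAv, hBv]
      · exfalso; linarith [hBv, hCv]
  · rintro (⟨h1', h2', h3'⟩ | ⟨h1', h2', h3'⟩ | ⟨h1', h2', h3'⟩ | ⟨h1', h2', h3'⟩ |
        ⟨h1', h2', h3'⟩) <;> subst h1' <;> subst h2' <;> subst h3' <;>
      refine ⟨by norm_num, by ring, by ring, by ring⟩
end

section
/- Let γ ∈ ℝ, let I ⊆ ℝ be an interval, and let (Ω, Σ, K) : I → ℝ³ be differentiable and satisfy (Ω', Σ', K') = G_γ(Ω, Σ, K) on I. Define Z = 1 − Ω² − Σ² − K. Then Z is differentiable on I and satisfies, for all t ∈ I, Z'(t) = Z(t)·( 3Ω(t)² + 6Σ(t)² + 2K(t) − 3γ·(Ω(t)² + Σ(t)² + K(t)) ). -/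
/-! The derivative of `Z = 1 - Ω² - Σ² - K` along a curve is `-2ΩΩ' - 2ΣΣ' - K'`; evaluated on the
vector field `G_γ` this cubic polynomial is divisible by `Z`, which is why `{Z = 0}` is invariant. -/

lemma hasDerivAt_one_sub_sq_sub_sq_sub {x y z : ℝ → ℝ} {v : ℝ × ℝ × ℝ} {t : ℝ}
    (h : HasDerivAt (fun t => (x t, y t, z t)) v t) :
    HasDerivAt (fun t => 1 - x t ^ 2 - y t ^ 2 - z t)
      (-(2 * x t * v.1) - 2 * y t * v.2.1 - v.2.2) t := by
  have hx : HasDerivAt x v.1 t := h.fst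
  have hy : HasDerivAt y v.2.1 t := h.snd.fst
  have hz : HasDerivAt z v.2.2 t := h.snd.snd
  refine ((((hasDerivAt_const t (1 : ℝ)).sub (hx.pow 2)).sub (hy.pow 2)).sub hz).congr_deriv ?_
  push_cast
  ring

lemma matterDensity_derivative_along_GBV (γ ω s k : ℝ) :
    -(2 * ω * (GBV γ (ω, s, k)).1) - 2 * s * (GBV γ (ω, s, k)).2.1 - (GBV γ (ω, s, k)).2.2 =
      (1 - ω ^ 2 - s ^ 2 - k) * (3 * ω ^ 2 + 6 * s ^ 2 + 2 * k - 3 * γ * (ω ^ 2 + s ^ 2 + k)) := by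
  simp only [GBV]
  ring

theorem bianchiV_Z_evolution_general (γ : ℝ) (I : Set ℝ)
    (Ω S K : ℝ → ℝ)
    (hode : ∀ t ∈ I,
      HasDerivAt (fun t => (Ω t, S t, K t)) (GBV γ (Ω t, S t, K t)) t) :
    ∀ t ∈ I,
      HasDerivAt (fun t => 1 - (Ω t) ^ 2 - (S t) ^ 2 - K t)
        ((1 - (Ω t) ^ 2 - (S t) ^ 2 - K t) *
          (3 * (Ω t) ^ 2 + 6 * (S t) ^ 2 + 2 * K t -
            3 * γ * ((Ω t) ^ 2 + (S t) ^ 2 + K t))) t := by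
  intro t ht
  rw [← matterDensity_derivative_along_GBV]
  exact hasDerivAt_one_sub_sq_sub_sq_sub (hode t ht)

/-- Along any solution `(Ω, Σ, K)` of the averaged Bianchi V guiding system on
an interval `I`, the quantity `Z = 1 - Ω² - Σ² - K` is differentiable and
satisfies `Z' = Z (3Ω² + 6Σ² + 2K - 3γ(Ω² + Σ² + K))`. -/
theorem bianchiV_Z_evolution (γ : ℝ) (I : Set ℝ) (hI : I.OrdConnected)
    (Ω S K : ℝ → ℝ)
    (hode : ∀ t ∈ I,
      HasDerivAt (fun t => (Ω t, S t, K t)) (GBV γ (Ω t, S t, K t)) t) :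
    ∀ t ∈ I,
      HasDerivAt (fun t => 1 - (Ω t) ^ 2 - (S t) ^ 2 - K t)
        ((1 - (Ω t) ^ 2 - (S t) ^ 2 - K t) *
          (3 * (Ω t) ^ 2 + 6 * (S t) ^ 2 + 2 * K t -
            3 * γ * ((Ω t) ^ 2 + (S t) ^ 2 + K t))) t :=
  bianchiV_Z_evolution_general γ I Ω S K hode
end

section
/- Let γ ∈ ℝ, t₀ ≤ T, and let (Ω, Σ, K) : [t₀, T] → ℝ³ be continuously differentiable and satisfy (Ω', Σ', K') = G_γ(Ω, Σ, K) on [t₀, T]. If Ω(t₀)² + Σ(t₀)² + K(t₀) < 1, then Ω(t)² + Σ(t)² + K(t) < 1 for every t ∈ [t₀, T]. -/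
open Set

section LinearODE

variable {a b : ℝ} {c : ℝ → ℝ}

theorem eq_zero_of_hasDerivAt_smul_self_of_eq_zero_right {E : Type*} [NormedAddCommGroup E]
    [NormedSpace ℝ E] {m : ℝ → E} (hc : ContinuousOn c (Icc a b))
    (hm : ∀ t ∈ Icc a b, HasDerivAt m (c t • m t) t) (hb : m b = 0) :
    ∀ t ∈ Icc a b, m t = 0 := by
  obtain ⟨C, hC⟩ := isCompact_Icc.exists_bound_of_continuousOn hc
  have hLip (t : ℝ) (ht : t ∈ Ioc a b) :
      LipschitzOnWith C.toNNReal (c t • · : E → E) univ := by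
    refine ((lipschitzWith_smul (c t)).weaken ?_).lipschitzOnWith
    rw [← NNReal.coe_le_coe, coe_nnnorm, Real.coe_toNNReal']
    exact (hC t (Ioc_subset_Icc_self ht)).trans (le_max_left _ _)
  have hm_cont : ContinuousOn m (Icc a b) := fun t ht => (hm t ht).continuousAt.continuousWithinAt
  refine ODE_solution_unique_of_mem_Icc_left (g := 0) hLip hm_cont
    (fun t ht => (hm t (Ioc_subset_Icc_self ht)).hasDerivWithinAt) (fun _ _ => mem_univ _)
    continuousOn_const (fun t _ => by simpa using hasDerivWithinAt_zero (F := E) t (Iic t))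
    (fun _ _ => mem_univ _) hb

theorem neg_of_hasDerivAt_mul_self {m : ℝ → ℝ} (hc : ContinuousOn c (Icc a b))
    (hm : ∀ t ∈ Icc a b, HasDerivAt m (c t * m t) t) (ha : m a < 0) :
    ∀ t ∈ Icc a b, m t < 0 := by
  intro t ht
  by_contra! hmt
  have hsub : Icc a t ⊆ Icc a b := Icc_subset_Icc_right ht.2
  have hm_cont : ContinuousOn m (Icc a t) := fun s hs =>
    (hm s (hsub hs)).continuousAt.continuousWithinAt
  obtain ⟨s, hs, hms⟩ := intermediate_value_Icc ht.1 hm_cont ⟨ha.le, hmt⟩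
  have hsub_s : Icc a s ⊆ Icc a b := Icc_subset_Icc_right (hs.2.trans ht.2)
  exact ha.ne <| eq_zero_of_hasDerivAt_smul_self_of_eq_zero_right (hc.mono hsub_s)
    (fun r hr => hm r (hsub_s hr)) hms a (left_mem_Icc.2 hs.1)

end LinearODE

def matterConstraint (p : ℝ × ℝ × ℝ) : ℝ := p.1 ^ 2 + p.2.1 ^ 2 + p.2.2 - 1

def matterConstraintRate (γ : ℝ) (p : ℝ × ℝ × ℝ) : ℝ :=
  6 * p.2.1 ^ 2 + 3 * p.1 ^ 2 + 2 * p.2.2 - 3 * γ * (p.1 ^ 2 + p.2.1 ^ 2 + p.2.2)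

theorem continuous_matterConstraintRate (γ : ℝ) : Continuous (matterConstraintRate γ) := by
  unfold matterConstraintRate; fun_prop

theorem HasDerivAt.matterConstraint_comp {γ t : ℝ} {x : ℝ → ℝ × ℝ × ℝ}
    (hx : HasDerivAt x (GBV γ (x t)) t) :
    HasDerivAt (fun t => matterConstraint (x t))
      (matterConstraintRate γ (x t) * matterConstraint (x t)) t := by
  have hΩ : HasDerivAt (fun s => (x s).1) (GBV γ (x t)).1 t := hx.fst
  have hS : HasDerivAt (fun s => (x s).2.1) (GBV γ (x t)).2.1 t := hx.snd.fst
  have hK : HasDerivAt (fun s => (x s).2.2) (GBV γ (x t)).2.2 t := hx.snd.snd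
  have h := (((hΩ.pow 2).add (hS.pow 2)).add hK).sub_const 1
  refine h.congr_deriv ?_
  simp only [GBV, matterConstraint, matterConstraintRate]
  ring

theorem bianchiV_forward_invariance_general (γ t₀ T : ℝ)
    (Ω S K : ℝ → ℝ)
    (hode : ∀ t ∈ Set.Icc t₀ T,
      HasDerivAt (fun t => (Ω t, S t, K t)) (GBV γ (Ω t, S t, K t)) t)
    (hinit : (Ω t₀) ^ 2 + (S t₀) ^ 2 + K t₀ < 1) :
    ∀ t ∈ Set.Icc t₀ T, (Ω t) ^ 2 + (S t) ^ 2 + K t < 1 := by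
  set x : ℝ → ℝ × ℝ × ℝ := fun t => (Ω t, S t, K t)
  have hx_cont : ContinuousOn x (Icc t₀ T) := fun t ht =>
    (hode t ht).continuousAt.continuousWithinAt
  have hneg := neg_of_hasDerivAt_mul_self
    ((continuous_matterConstraintRate γ).comp_continuousOn hx_cont)
    (fun t ht => (hode t ht).matterConstraint_comp)
    (by simp only [x, matterConstraint]; linarith)
  intro t ht
  have := hneg t ht
  simp only [x, matterConstraint] at this
  linarith

/-- Forward invariance under the averaged Bianchi V flow of the region
`Ω² + Σ² + K < 1` (positivity of matter energy density): if a solution on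
`[t₀, T]` starts with `Ω² + Σ² + K < 1`, then it stays there. -/
theorem bianchiV_forward_invariance (γ t₀ T : ℝ) (hT : t₀ ≤ T)
    (Ω S K : ℝ → ℝ)
    (hode : ∀ t ∈ Set.Icc t₀ T,
      HasDerivAt (fun t => (Ω t, S t, K t)) (GBV γ (Ω t, S t, K t)) t)
    (hinit : (Ω t₀) ^ 2 + (S t₀) ^ 2 + K t₀ < 1) :
    ∀ t ∈ Set.Icc t₀ T, (Ω t) ^ 2 + (S t) ^ 2 + K t < 1 :=
  bianchiV_forward_invariance_general γ t₀ T Ω S K hode hinit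
end

section
/- Let ω > 0, γ ∈ ℝ, and fix (Ω, Σ, K, Φ) ∈ ℝ⁴. Define, for t ∈ ℝ, f₁(t) = (1/4)·( 2(2 − 3γ)·Ω·K + 6Ω·( −γ(Σ² + Ω² − 1) + 2Σ² + (Ω² − 1)·cos(2(Φ − tω)) + Ω² − 1 ) ), f₂(t) = (1/2)·Σ·( −3(γ − 2)(Σ² − 1) − 3(γ − 1)Ω² + (2 − 3γ)K + 3Ω²·cos(2(Φ − tω)) ), f₃(t) = K·( −3γ(Σ² + Ω² − 1) + (2 − 3γ)K + 6Σ² + 3Ω²·cos(2(Φ − tω)) + 3Ω² − 2 ), f₄(t) = 3·sin(Φ − tω)·cos(Φ − tω). Then, with L = 2π/ω, the time averages (1/L)·∫₀^L fᵢ(t) dt equal, respectively: (1/2)·Ω·( −3(γ − 1)(Ω² − 1) − 3(γ − 2)Σ² + (2 − 3γ)K ), (1/2)·Σ·( −3(γ − 2)(Σ² − 1) − 3(γ − 1)Ω² + (2 − 3γ)K ), K·( −3(γ − 1)Ω² − 3(γ − 2)Σ² − (3γ − 2)(K − 1) ), and 0. -/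
/-!
Each of the first three components is a constant plus a multiple of `cos (2 (Φ - t ω))`, and the
fourth is `(3/2) sin (2 (Φ - t ω))`. The substitution `x = 2 (Φ - t ω)` turns one period of `t`
into the interval `[2Φ - 4π, 2Φ]` of length two periods of `sin` and `cos`, so the oscillating
terms average to zero and only the constants survive.
-/

open Real intervalIntegral

variable {ω : ℝ}

theorem integral_comp_two_mul_phase (f : ℝ → ℝ) (Φ : ℝ) (hω : ω ≠ 0) :
    ∫ t in (0 : ℝ)..2 * π / ω, f (2 * (Φ - t * ω)) =
      (2 * ω)⁻¹ * ∫ x in 2 * Φ - 4 * π..2 * Φ, f x := by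
  have h : ∀ t, 2 * (Φ - t * ω) = 2 * Φ - 2 * ω * t := fun t => by ring
  simp only [h]
  rw [integral_comp_sub_mul f (mul_ne_zero two_ne_zero hω), smul_eq_mul]
  congr 3 <;> field_simp <;> ring

theorem integral_cos_two_mul_phase (Φ : ℝ) (hω : ω ≠ 0) :
    ∫ t in (0 : ℝ)..2 * π / ω, cos (2 * (Φ - t * ω)) = 0 := by
  rw [integral_comp_two_mul_phase cos Φ hω, integral_cos,
    show 2 * Φ - 4 * π = 2 * Φ - 2 * π - 2 * π by ring, sin_sub_two_pi, sin_sub_two_pi,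
    sub_self, mul_zero]

theorem integral_sin_two_mul_phase (Φ : ℝ) (hω : ω ≠ 0) :
    ∫ t in (0 : ℝ)..2 * π / ω, sin (2 * (Φ - t * ω)) = 0 := by
  rw [integral_comp_two_mul_phase sin Φ hω, integral_sin,
    show 2 * Φ - 4 * π = 2 * Φ - 2 * π - 2 * π by ring, cos_sub_two_pi, cos_sub_two_pi,
    sub_self, mul_zero]

theorem integral_sin_mul_cos_phase (Φ : ℝ) (hω : ω ≠ 0) :
    ∫ t in (0 : ℝ)..2 * π / ω, sin (Φ - t * ω) * cos (Φ - t * ω) = 0 := by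
  have h : ∀ t, sin (Φ - t * ω) * cos (Φ - t * ω) = 2⁻¹ * sin (2 * (Φ - t * ω)) := fun t => by
    rw [sin_two_mul]; ring
  simp only [h, integral_const_mul, integral_sin_two_mul_phase Φ hω, mul_zero]

theorem average_const_add_mul_cos_two_mul_phase (C₁ C₂ Φ : ℝ) (hω : ω ≠ 0) :
    (1 / (2 * π / ω)) * ∫ t in (0 : ℝ)..2 * π / ω, (C₁ + C₂ * cos (2 * (Φ - t * ω))) = C₁ := by
  have hcos : IntervalIntegrable (fun t => C₂ * cos (2 * (Φ - t * ω))) MeasureTheory.volume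
      0 (2 * π / ω) := by
    apply Continuous.intervalIntegrable; fun_prop
  rw [integral_add intervalIntegrable_const hcos, integral_const_mul,
    integral_cos_two_mul_phase Φ hω, integral_const, smul_eq_mul]
  field_simp
  ring

/-- The time averages over one period `L = 2π/ω` of the components of the
leading-order Bianchi V vector field coincide with the components of the
averaged (guiding) Bianchi V system. -/
theorem bianchiV_time_averages (ω γ Ω S K Φ : ℝ) (hω : 0 < ω) :
    let L : ℝ := 2 * Real.pi / ω
    ((1 / L) * ∫ t in (0 : ℝ)..L,
        (1 / 4) * (2 * (2 - 3 * γ) * Ω * K +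
          6 * Ω * (-γ * (S ^ 2 + Ω ^ 2 - 1) + 2 * S ^ 2 +
            (Ω ^ 2 - 1) * Real.cos (2 * (Φ - t * ω)) + Ω ^ 2 - 1))
      = (1 / 2) * Ω * (-(3 * (γ - 1)) * (Ω ^ 2 - 1) - 3 * (γ - 2) * S ^ 2
          + (2 - 3 * γ) * K)) ∧
    ((1 / L) * ∫ t in (0 : ℝ)..L,
        (1 / 2) * S * (-(3 * (γ - 2)) * (S ^ 2 - 1) - 3 * (γ - 1) * Ω ^ 2
          + (2 - 3 * γ) * K + 3 * Ω ^ 2 * Real.cos (2 * (Φ - t * ω)))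
      = (1 / 2) * S * (-(3 * (γ - 2)) * (S ^ 2 - 1) - 3 * (γ - 1) * Ω ^ 2
          + (2 - 3 * γ) * K)) ∧
    ((1 / L) * ∫ t in (0 : ℝ)..L,
        K * (-(3 * γ) * (S ^ 2 + Ω ^ 2 - 1) + (2 - 3 * γ) * K + 6 * S ^ 2
          + 3 * Ω ^ 2 * Real.cos (2 * (Φ - t * ω)) + 3 * Ω ^ 2 - 2)
      = K * (-(3 * (γ - 1)) * Ω ^ 2 - 3 * (γ - 2) * S ^ 2
          - (3 * γ - 2) * (K - 1))) ∧
    ((1 / L) * ∫ t in (0 : ℝ)..L,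
        3 * Real.sin (Φ - t * ω) * Real.cos (Φ - t * ω)) = 0 := by
  dsimp only
  refine ⟨?_, ?_, ?_, ?_⟩
  · convert average_const_add_mul_cos_two_mul_phase _ (3 / 2 * Ω * (Ω ^ 2 - 1)) Φ hω.ne'
      using 4
    ring
  · convert average_const_add_mul_cos_two_mul_phase _ (3 / 2 * S * Ω ^ 2) Φ hω.ne' using 4
    ring
  · convert average_const_add_mul_cos_two_mul_phase _ (3 * K * Ω ^ 2) Φ hω.ne' using 4
    ring
  · simp only [mul_assoc, integral_const_mul, integral_sin_mul_cos_phase Φ hω.ne', mul_zero]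
end
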